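/- arXiv:2509.13012 — 5 statements merged into one kernel-verified Lean document; each statement's English description precedes it below -/
import Mathlib

section
/- Let γ ≥ 1, α, β > 0 with α+β ≥ 5γ². Let ξ ∈ ℝⁿ with 0 < |ξ| ≤ r for r sufficiently small, and let λ ∈ ℂ satisfy Re λ < 0, λ = -a² ± (a + c₀)i for some a > 0, c₀ > 0, and (γ/√2)|ξ| ≤ |λ| ≤ √2 γ|ξ|. Then with λ± = -½(α+β)|ξ|² ± ½√((α+β)²|ξ|⁴ - 4γ²|ξ|²), one has |λ - λ₊| ≥ C|ξ|² and |λ - λ₋| ≥ C|ξ|², where C > 0 depends only on α, β, γ (not on a, c₀, λ, ξ). -/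
open Complex

/-- `λ₊ = -½(α+β)r² + ½√((α+β)²r⁴ - 4γ²r²)` (principal complex square root), with `r = |ξ|`. -/
noncomputable def cnsLamPlus (α β γ r : ℝ) : ℂ :=
  -(((α + β) / 2 * r ^ 2 : ℝ) : ℂ) +
    (1 / 2 : ℂ) * ((((α + β) ^ 2 * r ^ 4 - 4 * γ ^ 2 * r ^ 2 : ℝ) : ℂ) ^ ((1 : ℂ) / 2))

/-- `λ₋ = -½(α+β)r² - ½√((α+β)²r⁴ - 4γ²r²)`. -/
noncomputable def cnsLamMinus (α β γ r : ℝ) : ℂ :=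
  -(((α + β) / 2 * r ^ 2 : ℝ) : ℂ) -
    (1 / 2 : ℂ) * ((((α + β) ^ 2 * r ^ 4 - 4 * γ ^ 2 * r ^ 2 : ℝ) : ℂ) ^ ((1 : ℂ) / 2))

lemma re_cpow_half_of_nonpos {x : ℝ} (hx : x ≤ 0) : (((x : ℂ)) ^ ((1 : ℂ)/2)).re = 0 := by
  rw [Complex.ofReal_cpow_of_nonpos hx]
  have h1 : ((-x : ℂ)) ^ ((1 : ℂ)/2) = ((((-x) ^ ((1:ℝ)/2) : ℝ)) : ℂ) := by
    rw [← Complex.ofReal_neg] at *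
    rw [Complex.ofReal_cpow (by linarith)]
    norm_num
  have h2 : Complex.exp (↑Real.pi * Complex.I * ((1:ℂ)/2)) = Complex.I := by
    have : (↑Real.pi * Complex.I * ((1:ℂ)/2)) = (↑(Real.pi/2) * Complex.I) := by
      push_cast; ring
    rw [this, Complex.exp_mul_I]
    simp
  rw [h1, h2]
  simp

/-- For `λ` on the parabolic contour `λ = -a² ± (a+c₀)i` with `(γ/√2)|ξ| ≤ ‖λ‖ ≤ √2γ|ξ|`
and `|ξ| ≤ r` small, one has `|λ - λ₊| ≥ C|ξ|²` and `|λ - λ₋| ≥ C|ξ|²`, with `C` depending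
only on `α, β, γ`. -/
theorem stmt_1 (n : ℕ) (α β γ : ℝ) (hα : 0 < α) (hβ : 0 < β) (hγ : 1 ≤ γ)
    (hvisc : 5 * γ ^ 2 ≤ α + β) :
    ∃ C > (0 : ℝ), ∃ r > (0 : ℝ),
      ∀ (ξ : EuclideanSpace ℝ (Fin n)) (lam : ℂ) (a c₀ : ℝ),
        0 < ‖ξ‖ → ‖ξ‖ ≤ r → 0 < a → 0 < c₀ →
        (lam = -(a ^ 2 : ℂ) + ((a + c₀ : ℝ) : ℂ) * Complex.I ∨
          lam = -(a ^ 2 : ℂ) - ((a + c₀ : ℝ) : ℂ) * Complex.I) →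
        lam.re < 0 →
        γ / Real.sqrt 2 * ‖ξ‖ ≤ ‖lam‖ → ‖lam‖ ≤ Real.sqrt 2 * γ * ‖ξ‖ →
        C * ‖ξ‖ ^ 2 ≤ ‖lam - cnsLamPlus α β γ ‖ξ‖‖ ∧
        C * ‖ξ‖ ^ 2 ≤ ‖lam - cnsLamMinus α β γ ‖ξ‖‖ := by
  have hab : (0 : ℝ) < α + β := by linarith
  refine ⟨1/2, by norm_num, 2*γ/(α+β), by positivity, ?_⟩
  intro ξ lam a c₀ hs hsr ha hc hlam hre hlow hup
  set s := ‖ξ‖ with hsdef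
  have hD : (α+β)^2 * s^4 - 4*γ^2*s^2 ≤ 0 := by
    have h1 : s * (α + β) ≤ 2 * γ := by
      rw [div_eq_mul_inv] at hsr
      calc s * (α + β) ≤ (2*γ*(α+β)⁻¹) * (α+β) := by
            exact mul_le_mul_of_nonneg_right hsr hab.le
        _ = 2*γ := by field_simp
    nlinarith [hs.le, sq_nonneg s, mul_le_mul h1 h1 (by positivity) (by positivity)]
  have hre0 : ((((α+β)^2*s^4 - 4*γ^2*s^2 : ℝ) : ℂ) ^ ((1:ℂ)/2)).re = 0 :=
    re_cpow_half_of_nonpos hD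
  have hlamre : lam.re = -a^2 := by
    rcases hlam with h | h <;> simp [h, ← Complex.ofReal_pow]
  have hlamim : |lam.im| = a + c₀ := by
    rcases hlam with h | h
    · simp [h, ← Complex.ofReal_pow, abs_of_pos (by linarith : (0:ℝ) < a + c₀)]
    · have him' : lam.im = -(a + c₀) := by
        simp [h, ← Complex.ofReal_pow]
      rw [him', abs_neg, abs_of_pos (by linarith : (0:ℝ) < a + c₀)]
  have him : a + c₀ ≤ Real.sqrt 2 * γ * s := by
    calc a + c₀ = |lam.im| := hlamim.symm
      _ ≤ ‖lam‖ := Complex.abs_im_le_norm lam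
      _ ≤ _ := hup
  have hsqrt2 : Real.sqrt 2 ^ 2 = 2 := Real.sq_sqrt (by norm_num)
  have ha2 : a^2 ≤ 2*γ^2*s^2 := by
    have haa : a ≤ Real.sqrt 2 * γ * s := by linarith
    have h0 : (0:ℝ) ≤ Real.sqrt 2 * γ * s := by positivity
    nlinarith [mul_le_mul haa haa ha.le h0]
  have key : ∀ lp : ℂ, lp.re = -((α+β)/2*s^2) → 1/2 * s^2 ≤ ‖lam - lp‖ := by
    intro lp hlp
    have hre2 : (lam - lp).re = -a^2 + (α+β)/2*s^2 := by
      simp [Complex.sub_re, hlamre, hlp]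
    calc (1:ℝ)/2 * s^2 ≤ (lam - lp).re := by
          rw [hre2]; nlinarith [sq_nonneg s, sq_nonneg (γ - 1), sq_nonneg γ]
      _ ≤ |(lam - lp).re| := le_abs_self _
      _ ≤ ‖lam - lp‖ := Complex.abs_re_le_norm _
  constructor
  · refine key _ ?_
    rw [cnsLamPlus, Complex.add_re, Complex.neg_re, Complex.ofReal_re, Complex.mul_re, hre0]
    simp
  · refine key _ ?_
    rw [cnsLamMinus, Complex.sub_re, Complex.neg_re, Complex.ofReal_re, Complex.mul_re, hre0]
    simp
end

section
/- Let γ ≥ 1 and α, β > 0. For λ ∈ ℂ with Re λ > 0, λ ∉ {λ₊(ξ), λ₋(ξ)}, and ξ ∈ ℝⁿ, ξ ≠ 0, one has |λ/((λ-λ₊)(λ-λ₋))| = |1/(λ + (α+β)|ξ|² + γ²|ξ|²/λ)| ≤ 1/((α+β)|ξ|²), where λ± = -½(α+β)|ξ|² ± ½√((α+β)²|ξ|⁴ - 4γ²|ξ|²). -/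
open Complex

/-- For `Re λ > 0`, the resolvent factor satisfies
`|λ/((λ-λ₊)(λ-λ₋))| = |1/(λ + (α+β)|ξ|² + γ²|ξ|²/λ)| ≤ 1/((α+β)|ξ|²)`. -/
theorem stmt_2 (n : ℕ) (α β γ : ℝ) (hα : 0 < α) (hβ : 0 < β) (hγ : 1 ≤ γ)
    (ξ : EuclideanSpace ℝ (Fin n)) (hξ : ξ ≠ 0) (lam : ℂ) (hre : 0 < lam.re)
    (hneP : lam ≠ cnsLamPlus α β γ ‖ξ‖) (hneM : lam ≠ cnsLamMinus α β γ ‖ξ‖) :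
    ‖lam / ((lam - cnsLamPlus α β γ ‖ξ‖) * (lam - cnsLamMinus α β γ ‖ξ‖))‖
      = ‖1 / (lam + (((α + β) * ‖ξ‖ ^ 2 : ℝ) : ℂ) + ((γ ^ 2 * ‖ξ‖ ^ 2 : ℝ) : ℂ) / lam)‖ ∧
    ‖lam / ((lam - cnsLamPlus α β γ ‖ξ‖) * (lam - cnsLamMinus α β γ ‖ξ‖))‖
      ≤ 1 / ((α + β) * ‖ξ‖ ^ 2) := by
  set r : ℝ := ‖ξ‖ with hr
  have hr0 : 0 < r := norm_pos_iff.mpr hξ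
  have hlam0 : lam ≠ 0 := by
    intro h; rw [h] at hre; simp at hre
  -- square root squared
  set D : ℝ := (α + β) ^ 2 * r ^ 4 - 4 * γ ^ 2 * r ^ 2 with hD
  have hs : (((D : ℂ)) ^ ((1 : ℂ) / 2)) ^ 2 = (D : ℂ) := by
    rw [show ((1 : ℂ) / 2) = (((2 : ℕ) : ℂ))⁻¹ by norm_num]
    exact Complex.cpow_nat_inv_pow _ two_ne_zero
  -- the product factorization
  have hfact : (lam - cnsLamPlus α β γ r) * (lam - cnsLamMinus α β γ r)
      = lam ^ 2 + (((α + β) * r ^ 2 : ℝ) : ℂ) * lam + ((γ ^ 2 * r ^ 2 : ℝ) : ℂ) := by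
    unfold cnsLamPlus cnsLamMinus
    have expand : (lam - (-(((α + β) / 2 * r ^ 2 : ℝ) : ℂ) +
          (1 / 2 : ℂ) * ((D : ℂ) ^ ((1 : ℂ) / 2)))) *
        (lam - (-(((α + β) / 2 * r ^ 2 : ℝ) : ℂ) -
          (1 / 2 : ℂ) * ((D : ℂ) ^ ((1 : ℂ) / 2))))
        = (lam + (((α + β) / 2 * r ^ 2 : ℝ) : ℂ)) ^ 2
          - (1 / 4 : ℂ) * (((D : ℂ)) ^ ((1 : ℂ) / 2)) ^ 2 := by ring
    rw [expand, hs]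
    push_cast [hD]
    ring
  have key : lam / ((lam - cnsLamPlus α β γ r) * (lam - cnsLamMinus α β γ r))
      = 1 / (lam + (((α + β) * r ^ 2 : ℝ) : ℂ) + ((γ ^ 2 * r ^ 2 : ℝ) : ℂ) / lam) := by
    rw [hfact]
    rw [show lam + (((α + β) * r ^ 2 : ℝ) : ℂ) + ((γ ^ 2 * r ^ 2 : ℝ) : ℂ) / lam
        = (lam ^ 2 + (((α + β) * r ^ 2 : ℝ) : ℂ) * lam + ((γ ^ 2 * r ^ 2 : ℝ) : ℂ)) / lam by
      field_simp]
    rw [one_div_div]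
  refine ⟨by rw [key], ?_⟩
  rw [key]
  set z : ℂ := lam + (((α + β) * r ^ 2 : ℝ) : ℂ) + ((γ ^ 2 * r ^ 2 : ℝ) : ℂ) / lam with hz
  have hb : 0 < (α + β) * r ^ 2 := by positivity
  have hcre : 0 ≤ (((γ ^ 2 * r ^ 2 : ℝ) : ℂ) / lam).re := by
    rw [Complex.div_re]
    simp only [Complex.ofReal_re, Complex.ofReal_im]
    have h1 : 0 ≤ γ ^ 2 * r ^ 2 * lam.re / Complex.normSq lam :=
      div_nonneg (mul_nonneg (by positivity) hre.le) (Complex.normSq_nonneg lam)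
    simpa using h1
  have hzre : (α + β) * r ^ 2 ≤ z.re := by
    rw [hz]
    simp only [Complex.add_re, Complex.ofReal_re]
    nlinarith [hre, hcre]
  have hznorm : (α + β) * r ^ 2 ≤ ‖z‖ := hzre.trans (Complex.re_le_norm z)
  rw [norm_div, norm_one]
  exact div_le_div_of_nonneg_left (by norm_num) hb hznorm
end

section
/- Let λ ∈ ℂ, ξ ∈ ℝⁿ, α, β, γ > 0, and suppose √2 γ|ξ| < |λ| and |ξ| ≤ r∞ where r∞ is small enough that r∞/(√2 γ) ≤ 1/(3(α+β)). Then |λ² + (α+β)λ|ξ|² + γ²|ξ|²| ≥ |λ|²/6. -/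
open Complex

/-- If `√2 γ|ξ| < |λ|` and `|ξ| ≤ r∞` with `r∞/(√2 γ) ≤ 1/(3(α+β))`, then
`|λ² + (α+β)λ|ξ|² + γ²|ξ|²| ≥ |λ|²/6`. -/
theorem stmt_4 (n : ℕ) (α β γ : ℝ) (hα : 0 < α) (hβ : 0 < β) (hγ : 0 < γ)
    (rinf : ℝ) (hrinf : rinf / (Real.sqrt 2 * γ) ≤ 1 / (3 * (α + β)))
    (ξ : EuclideanSpace ℝ (Fin n)) (lam : ℂ)
    (hlam : Real.sqrt 2 * γ * ‖ξ‖ < ‖lam‖) (hξ : ‖ξ‖ ≤ rinf) :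
    ‖lam‖ ^ 2 / 6 ≤
      ‖lam ^ 2 + ((α + β : ℝ) : ℂ) * lam * ((‖ξ‖ ^ 2 : ℝ) : ℂ)
        + ((γ ^ 2 * ‖ξ‖ ^ 2 : ℝ) : ℂ)‖ := by
  set r := ‖ξ‖ with hr
  set L := ‖lam‖ with hL
  have hr0 : 0 ≤ r := norm_nonneg _
  have hL0 : 0 ≤ L := norm_nonneg _
  have hs2 : (0:ℝ) < Real.sqrt 2 := by positivity
  have hc : (0:ℝ) < α + β := by linarith
  have hrinf' : rinf ≤ Real.sqrt 2 * γ / (3 * (α + β)) := by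
    rw [div_le_div_iff₀ (by positivity) (by positivity)] at hrinf
    rw [le_div_iff₀ (by positivity)]
    linarith
  have hrb : r ≤ Real.sqrt 2 * γ / (3 * (α + β)) := le_trans hξ hrinf'
  have h3 : (α + β) * r ^ 2 ≤ Real.sqrt 2 * γ * r / 3 := by
    have := mul_le_mul_of_nonneg_right hrb hr0
    rw [div_mul_eq_mul_div, le_div_iff₀ (by positivity)] at this
    nlinarith
  have h4 : (α + β) * r ^ 2 ≤ L / 3 := by nlinarith
  have h5 : γ ^ 2 * r ^ 2 < L ^ 2 / 2 := by
    have h2 : Real.sqrt 2 ^ 2 = 2 := Real.sq_sqrt (by norm_num)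
    have hsq := mul_self_lt_mul_self (by positivity : (0:ℝ) ≤ Real.sqrt 2 * γ * r) hlam
    nlinarith
  have habs : ‖(((α + β) * r ^ 2 : ℝ) : ℂ)‖ = (α + β) * r ^ 2 := by
    rw [Complex.norm_real]; exact abs_of_nonneg (by positivity)
  have key1 : L * (L - (α + β) * r ^ 2) ≤ ‖lam ^ 2 + ((α + β : ℝ) : ℂ) * lam * ((r ^ 2 : ℝ) : ℂ)‖ := by
    have heq : lam ^ 2 + ((α + β : ℝ) : ℂ) * lam * ((r ^ 2 : ℝ) : ℂ)
        = lam * (lam + (((α + β) * r ^ 2 : ℝ) : ℂ)) := by push_cast; ring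
    rw [heq, norm_mul]
    have h6 : L - (α + β) * r ^ 2 ≤ ‖lam + (((α + β) * r ^ 2 : ℝ) : ℂ)‖ := by
      have := norm_sub_le (lam + (((α + β) * r ^ 2 : ℝ) : ℂ)) (((α + β) * r ^ 2 : ℝ) : ℂ)
      rw [add_sub_cancel_right, habs] at this
      rw [hL]; linarith
    have hnn : 0 ≤ L - (α + β) * r ^ 2 := by nlinarith
    rw [← hL]
    exact mul_le_mul_of_nonneg_left h6 hL0
  have hg : ‖((γ ^ 2 * r ^ 2 : ℝ) : ℂ)‖ = γ ^ 2 * r ^ 2 := by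
    rw [Complex.norm_real]; exact abs_of_nonneg (by positivity)
  have tri : ‖lam ^ 2 + ((α + β : ℝ) : ℂ) * lam * ((r ^ 2 : ℝ) : ℂ)‖ - (γ ^ 2 * r ^ 2)
      ≤ ‖lam ^ 2 + ((α + β : ℝ) : ℂ) * lam * ((r ^ 2 : ℝ) : ℂ) + ((γ ^ 2 * r ^ 2 : ℝ) : ℂ)‖ := by
    have := norm_sub_le (lam ^ 2 + ((α + β : ℝ) : ℂ) * lam * ((r ^ 2 : ℝ) : ℂ) + ((γ ^ 2 * r ^ 2 : ℝ) : ℂ)) (((γ ^ 2 * r ^ 2 : ℝ) : ℂ))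
    rw [add_sub_cancel_right, hg] at this
    linarith
  nlinarith [key1, tri, h4, h5, hL0]
end

section
/- Let 1 < p₁, p₂ < ∞, 1 ≤ q₁, q₂ ≤ ∞, 1 ≤ p < ∞ with 1/p = 1/p₁ + 1/p₂ and 1/q = 1/q₁ + 1/q₂. If f ∈ L^{p₁,q₁}(ℝⁿ) and g ∈ L^{p₂,q₂}(ℝⁿ), then fg ∈ L^{p,q}(ℝⁿ) and ‖fg‖_{L^{p,q}} ≤ C ‖f‖_{L^{p₁,q₁}} ‖g‖_{L^{p₂,q₂}}. -/
open MeasureTheory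
open scoped ENNReal
open Filter Set
open scoped Topology

/-- Non-increasing rearrangement `f*(s) = inf{t > 0 : |{|f| > t}| ≤ s}`. -/
noncomputable def rearrangement {α : Type*} [MeasurableSpace α] (μ : Measure α)
    (f : α → ℂ) (s : ℝ≥0∞) : ℝ≥0∞ :=
  sInf {t : ℝ≥0∞ | μ {x | t < (‖f x‖₊ : ℝ≥0∞)} ≤ s}

/-- The Lorentz `L^{p,q}` quasinorm defined via the non-increasing rearrangement:
`(∫₀^∞ (s^{1/p} f*(s))^q ds/s)^{1/q}` for `q < ∞`, and `sup_{s>0} s^{1/p} f*(s)` for `q = ∞`. -/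
noncomputable def lorentzNorm {α : Type*} [MeasurableSpace α] (μ : Measure α)
    (p q : ℝ≥0∞) (f : α → ℂ) : ℝ≥0∞ :=
  if q = ⊤ then
    ⨆ (s : ℝ) (_ : 0 < s), ENNReal.ofReal s ^ (1 / p).toReal * rearrangement μ f (ENNReal.ofReal s)
  else
    (∫⁻ s in Set.Ioi (0 : ℝ),
        (ENNReal.ofReal s ^ (1 / p).toReal * rearrangement μ f (ENNReal.ofReal s)) ^ q.toReal
          / ENNReal.ofReal s) ^ (1 / q).toReal

open Filter Set in
lemma rearr_antitone {α : Type*} [MeasurableSpace α] (μ : Measure α) (f : α → ℂ) :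
    Antitone (rearrangement μ f) :=
  fun _ _ hst => sInf_le_sInf (fun _ hu => le_trans hu hst)

lemma lorentz_pow {α : Type*} [MeasurableSpace α] (μ : Measure α) (p' q' : ℝ≥0∞) (f : α → ℂ)
    (h0 : q' ≠ 0) (hT : q' ≠ ⊤) :
    (lorentzNorm μ p' q' f) ^ q'.toReal
      = ∫⁻ s in Set.Ioi (0:ℝ), (ENNReal.ofReal s ^ (1/p').toReal
          * rearrangement μ f (ENNReal.ofReal s)) ^ q'.toReal / ENNReal.ofReal s := by
  rw [lorentzNorm, if_neg hT, ← ENNReal.rpow_mul,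
    show (1/q').toReal * q'.toReal = 1 by
      rw [one_div, ENNReal.toReal_inv, inv_mul_cancel₀ (ENNReal.toReal_ne_zero.mpr ⟨h0, hT⟩)],
    ENNReal.rpow_one]

lemma lorentz_top_le {α : Type*} [MeasurableSpace α] (μ : Measure α) (p' : ℝ≥0∞) (f : α → ℂ)
    {u : ℝ} (hu : 0 < u) :
    ENNReal.ofReal u ^ (1/p').toReal * rearrangement μ f (ENNReal.ofReal u)
      ≤ lorentzNorm μ p' ⊤ f := by
  rw [lorentzNorm, if_pos rfl]
  exact le_iSup₂ (f := fun (s:ℝ) (_ : 0 < s) =>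
    ENNReal.ofReal s ^ (1/p').toReal * rearrangement μ f (ENNReal.ofReal s)) u hu

lemma lorentz_func_meas {α : Type*} [MeasurableSpace α] (μ : Measure α) (f : α → ℂ) (c e : ℝ) :
    Measurable fun u : ℝ => (ENNReal.ofReal u ^ c * rearrangement μ f (ENNReal.ofReal u)) ^ e :=
  ((ENNReal.measurable_ofReal.pow measurable_const).mul
    (Antitone.measurable (fun _ _ huv => rearr_antitone μ f (ENNReal.ofReal_le_ofReal huv)))).pow
    measurable_const

lemma lintegral_half (h : ℝ → ℝ≥0∞) (hm : Measurable h) :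
    ∫⁻ s in Set.Ioi (0:ℝ), h (s/2) / ENNReal.ofReal s
      = ∫⁻ s in Set.Ioi (0:ℝ), h s / ENNReal.ofReal s := by
  have hmeas : Measurable fun s : ℝ => (Set.Ioi (0:ℝ)).indicator
      (fun s => h (s/2) / ENNReal.ofReal s) s :=
    (Measurable.div (hm.comp (measurable_id.div_const 2)) ENNReal.measurable_ofReal).indicator
      measurableSet_Ioi
  have key : ∫⁻ s, (Set.Ioi (0:ℝ)).indicator (fun s => h (s/2) / ENNReal.ofReal s) s
      = 2 * ∫⁻ u, (Set.Ioi (0:ℝ)).indicator (fun s => h (s/2) / ENNReal.ofReal s) (2*u) := by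
    conv_lhs => rw [← Real.smul_map_volume_mul_left (two_ne_zero (α := ℝ))]
    rw [lintegral_smul_measure, lintegral_map hmeas (measurable_const_mul 2)]
    norm_num
  have ptw : ∀ u : ℝ, (Set.Ioi (0:ℝ)).indicator (fun s => h (s/2) / ENNReal.ofReal s) (2*u)
      = 2⁻¹ * (Set.Ioi (0:ℝ)).indicator (fun s => h s / ENNReal.ofReal s) u := by
    intro u
    by_cases hu : 0 < u
    · have h2u : (0:ℝ) < 2*u := by linarith
      rw [Set.indicator_of_mem (Set.mem_Ioi.mpr h2u), Set.indicator_of_mem (Set.mem_Ioi.mpr hu)]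
      have : (2*u)/2 = u := by ring
      rw [this]
      rw [show ENNReal.ofReal (2*u) = 2 * ENNReal.ofReal u by
        rw [ENNReal.ofReal_mul (by norm_num)]; norm_num]
      rw [ENNReal.div_eq_inv_mul, ENNReal.div_eq_inv_mul,
        ENNReal.mul_inv (Or.inl (by norm_num)) (Or.inl (by norm_num))]
      ring
    · have h2u : ¬ ((0:ℝ) < 2*u) := by intro hc; apply hu; linarith
      rw [Set.indicator_of_notMem (by simpa using h2u),
        Set.indicator_of_notMem (by simpa using hu), mul_zero]
  rw [← lintegral_indicator measurableSet_Ioi, ← lintegral_indicator measurableSet_Ioi, key]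
  simp_rw [ptw]
  rw [lintegral_const_mul 2⁻¹ (f := (Set.Ioi (0:ℝ)).indicator (fun s => h s / ENNReal.ofReal s)) ((Measurable.div hm ENNReal.measurable_ofReal).indicator
    measurableSet_Ioi), ← mul_assoc, ENNReal.mul_inv_cancel (by norm_num) (by norm_num), one_mul]

lemma lintegral_half' {α : Type*} [MeasurableSpace α] (μ : Measure α) (f : α → ℂ) (c e : ℝ) :
    ∫⁻ s in Set.Ioi (0:ℝ), (ENNReal.ofReal (s/2) ^ c * rearrangement μ f (ENNReal.ofReal (s/2))) ^ e
        / ENNReal.ofReal s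
      = ∫⁻ s in Set.Ioi (0:ℝ), (ENNReal.ofReal s ^ c * rearrangement μ f (ENNReal.ofReal s)) ^ e
        / ENNReal.ofReal s :=
  lintegral_half _ (lorentz_func_meas μ f c e)

lemma J_le_top_left {α : Type*} [MeasurableSpace α] (μ : Measure α) (f g : α → ℂ)
    (p₁ p₂ q : ℝ≥0∞) (hq0 : q ≠ 0) (hqT : q ≠ ⊤)
    (hA : lorentzNorm μ p₁ ⊤ f < ⊤) :
    (∫⁻ s in Set.Ioi (0:ℝ),
        ((ENNReal.ofReal (s/2) ^ (1/p₁).toReal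
              * rearrangement μ f (ENNReal.ofReal (s/2))) ^ q.toReal
          * (ENNReal.ofReal (s/2) ^ (1/p₂).toReal
              * rearrangement μ g (ENNReal.ofReal (s/2))) ^ q.toReal)
          / ENNReal.ofReal s)
      ≤ (lorentzNorm μ p₁ ⊤ f) ^ q.toReal * (lorentzNorm μ p₂ q g) ^ q.toReal := by
  have hqr : 0 < q.toReal := ENNReal.toReal_pos hq0 hqT
  have hptb : ∀ s : ℝ, s ∈ Set.Ioi (0:ℝ) →
      ((ENNReal.ofReal (s/2) ^ (1/p₁).toReal
            * rearrangement μ f (ENNReal.ofReal (s/2))) ^ q.toReal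
        * (ENNReal.ofReal (s/2) ^ (1/p₂).toReal
            * rearrangement μ g (ENNReal.ofReal (s/2))) ^ q.toReal)
        / ENNReal.ofReal s
      ≤ (lorentzNorm μ p₁ ⊤ f) ^ q.toReal
        * ((ENNReal.ofReal (s/2) ^ (1/p₂).toReal
            * rearrangement μ g (ENNReal.ofReal (s/2))) ^ q.toReal / ENNReal.ofReal s) := by
    intro s hs
    rw [mul_div_assoc]
    exact mul_le_mul_left
      (ENNReal.rpow_le_rpow (lorentz_top_le μ p₁ f (half_pos (Set.mem_Ioi.mp hs))) hqr.le) _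
  calc (∫⁻ s in Set.Ioi (0:ℝ), _)
      ≤ ∫⁻ s in Set.Ioi (0:ℝ), (lorentzNorm μ p₁ ⊤ f) ^ q.toReal
          * ((ENNReal.ofReal (s/2) ^ (1/p₂).toReal
              * rearrangement μ g (ENNReal.ofReal (s/2))) ^ q.toReal / ENNReal.ofReal s) :=
        lintegral_mono_ae ((ae_restrict_iff' measurableSet_Ioi).2 (ae_of_all _ hptb))
    _ = (lorentzNorm μ p₁ ⊤ f) ^ q.toReal
          * ∫⁻ s in Set.Ioi (0:ℝ), (ENNReal.ofReal (s/2) ^ (1/p₂).toReal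
              * rearrangement μ g (ENNReal.ofReal (s/2))) ^ q.toReal / ENNReal.ofReal s :=
        lintegral_const_mul' _ _ (ENNReal.rpow_ne_top_of_nonneg hqr.le hA.ne)
    _ = _ := by rw [lintegral_half' μ g _ _, lorentz_pow μ p₂ q g hq0 hqT]

lemma J_le_top_right {α : Type*} [MeasurableSpace α] (μ : Measure α) (f g : α → ℂ)
    (p₁ p₂ q : ℝ≥0∞) (hq0 : q ≠ 0) (hqT : q ≠ ⊤)
    (hB : lorentzNorm μ p₂ ⊤ g < ⊤) :
    (∫⁻ s in Set.Ioi (0:ℝ),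
        ((ENNReal.ofReal (s/2) ^ (1/p₁).toReal
              * rearrangement μ f (ENNReal.ofReal (s/2))) ^ q.toReal
          * (ENNReal.ofReal (s/2) ^ (1/p₂).toReal
              * rearrangement μ g (ENNReal.ofReal (s/2))) ^ q.toReal)
          / ENNReal.ofReal s)
      ≤ (lorentzNorm μ p₁ q f) ^ q.toReal * (lorentzNorm μ p₂ ⊤ g) ^ q.toReal := by
  have hqr : 0 < q.toReal := ENNReal.toReal_pos hq0 hqT
  have hptb : ∀ s : ℝ, s ∈ Set.Ioi (0:ℝ) →
      ((ENNReal.ofReal (s/2) ^ (1/p₁).toReal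
            * rearrangement μ f (ENNReal.ofReal (s/2))) ^ q.toReal
        * (ENNReal.ofReal (s/2) ^ (1/p₂).toReal
            * rearrangement μ g (ENNReal.ofReal (s/2))) ^ q.toReal)
        / ENNReal.ofReal s
      ≤ ((ENNReal.ofReal (s/2) ^ (1/p₁).toReal
            * rearrangement μ f (ENNReal.ofReal (s/2))) ^ q.toReal / ENNReal.ofReal s)
          * (lorentzNorm μ p₂ ⊤ g) ^ q.toReal := by
    intro s hs
    rw [div_eq_mul_inv, div_eq_mul_inv, mul_right_comm]
    exact mul_le_mul_right
      (ENNReal.rpow_le_rpow (lorentz_top_le μ p₂ g (half_pos (Set.mem_Ioi.mp hs))) hqr.le) _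
  calc (∫⁻ s in Set.Ioi (0:ℝ), _)
      ≤ ∫⁻ s in Set.Ioi (0:ℝ),
          ((ENNReal.ofReal (s/2) ^ (1/p₁).toReal
            * rearrangement μ f (ENNReal.ofReal (s/2))) ^ q.toReal / ENNReal.ofReal s)
          * (lorentzNorm μ p₂ ⊤ g) ^ q.toReal :=
        lintegral_mono_ae ((ae_restrict_iff' measurableSet_Ioi).2 (ae_of_all _ hptb))
    _ = (∫⁻ s in Set.Ioi (0:ℝ), (ENNReal.ofReal (s/2) ^ (1/p₁).toReal
            * rearrangement μ f (ENNReal.ofReal (s/2))) ^ q.toReal / ENNReal.ofReal s)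
          * (lorentzNorm μ p₂ ⊤ g) ^ q.toReal :=
        lintegral_mul_const' _ _ (ENNReal.rpow_ne_top_of_nonneg hqr.le hB.ne)
    _ = _ := by rw [lintegral_half' μ f _ _, lorentz_pow μ p₁ q f hq0 hqT]

lemma J_le_holder {α : Type*} [MeasurableSpace α] (μ : Measure α) (f g : α → ℂ)
    (p₁ p₂ q₁ q₂ q : ℝ≥0∞) (hq₁0 : q₁ ≠ 0) (hq₁T : q₁ ≠ ⊤) (hq₂0 : q₂ ≠ 0) (hq₂T : q₂ ≠ ⊤)
    (hq0 : q ≠ 0) (hqT : q ≠ ⊤)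
    (hr' : q.toReal⁻¹ = q₁.toReal⁻¹ + q₂.toReal⁻¹) :
    (∫⁻ s in Set.Ioi (0:ℝ),
        ((ENNReal.ofReal (s/2) ^ (1/p₁).toReal
              * rearrangement μ f (ENNReal.ofReal (s/2))) ^ q.toReal
          * (ENNReal.ofReal (s/2) ^ (1/p₂).toReal
              * rearrangement μ g (ENNReal.ofReal (s/2))) ^ q.toReal)
          / ENNReal.ofReal s)
      ≤ (lorentzNorm μ p₁ q₁ f) ^ q.toReal * (lorentzNorm μ p₂ q₂ g) ^ q.toReal := by
  have hqr : 0 < q.toReal := ENNReal.toReal_pos hq0 hqT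
  have hq₁r : 0 < q₁.toReal := ENNReal.toReal_pos hq₁0 hq₁T
  have hq₂r : 0 < q₂.toReal := ENNReal.toReal_pos hq₂0 hq₂T
  set r₁ := q₁.toReal / q.toReal with hr₁def
  set r₂ := q₂.toReal / q.toReal with hr₂def
  have hr₁0 : 0 < r₁ := div_pos hq₁r hqr
  have hr₂0 : 0 < r₂ := div_pos hq₂r hqr
  have hlt : q.toReal < q₁.toReal := by
    have h1 : q₁.toReal⁻¹ < q.toReal⁻¹ := by
      rw [hr']; exact lt_add_of_pos_right _ (by positivity)
    exact (inv_lt_inv₀ hq₁r hqr).mp h1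
  have conj : Real.HolderConjugate r₁ r₂ := by
    refine ⟨?_, hr₁0, hr₂0⟩
    · rw [inv_one, hr₁def, hr₂def, inv_div, inv_div, div_eq_mul_inv, div_eq_mul_inv, ← mul_add, ← hr',
        mul_inv_cancel₀ hqr.ne']
  set φ₁ : ℝ → ℝ≥0∞ := fun s => (ENNReal.ofReal (s/2) ^ (1/p₁).toReal
      * rearrangement μ f (ENNReal.ofReal (s/2))) ^ q.toReal
      * ((ENNReal.ofReal s)⁻¹) ^ r₁⁻¹ with hφ₁def
  set φ₂ : ℝ → ℝ≥0∞ := fun s => (ENNReal.ofReal (s/2) ^ (1/p₂).toReal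
      * rearrangement μ g (ENNReal.ofReal (s/2))) ^ q.toReal
      * ((ENNReal.ofReal s)⁻¹) ^ r₂⁻¹ with hφ₂def
  have hφ₁m : Measurable φ₁ :=
    ((lorentz_func_meas μ f (1/p₁).toReal q.toReal).comp (measurable_id.div_const 2)).mul
      ((ENNReal.measurable_ofReal.inv).pow measurable_const)
  have hφ₂m : Measurable φ₂ :=
    ((lorentz_func_meas μ g (1/p₂).toReal q.toReal).comp (measurable_id.div_const 2)).mul
      ((ENNReal.measurable_ofReal.inv).pow measurable_const)
  have holder := ENNReal.lintegral_mul_le_Lp_mul_Lq (μ := volume.restrict (Set.Ioi (0:ℝ))) conj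
    hφ₁m.aemeasurable hφ₂m.aemeasurable
  have hptw : ∀ s : ℝ,
      ((ENNReal.ofReal (s/2) ^ (1/p₁).toReal
            * rearrangement μ f (ENNReal.ofReal (s/2))) ^ q.toReal
        * (ENNReal.ofReal (s/2) ^ (1/p₂).toReal
            * rearrangement μ g (ENNReal.ofReal (s/2))) ^ q.toReal)
        / ENNReal.ofReal s = φ₁ s * φ₂ s := by
    intro s
    have hY : ((ENNReal.ofReal s)⁻¹) ^ r₁⁻¹ * ((ENNReal.ofReal s)⁻¹) ^ r₂⁻¹
        = (ENNReal.ofReal s)⁻¹ := by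
      rw [← ENNReal.rpow_add_of_nonneg _ _ (by positivity) (by positivity),
        conj.inv_add_inv_eq_one, ENNReal.rpow_one]
    rw [hφ₁def, hφ₂def, div_eq_mul_inv, ← hY]
    ring
  have hE1 : ∫⁻ s in Set.Ioi (0:ℝ), φ₁ s ^ r₁ = (lorentzNorm μ p₁ q₁ f) ^ q₁.toReal := by
    have hpt : ∀ s : ℝ, φ₁ s ^ r₁ = (ENNReal.ofReal (s/2) ^ (1/p₁).toReal
        * rearrangement μ f (ENNReal.ofReal (s/2))) ^ q₁.toReal / ENNReal.ofReal s := by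
      intro s
      rw [hφ₁def, ENNReal.mul_rpow_of_nonneg _ _ hr₁0.le, ← ENNReal.rpow_mul,
        ← ENNReal.rpow_mul, show q.toReal * r₁ = q₁.toReal by rw [hr₁def]; field_simp,
        inv_mul_cancel₀ hr₁0.ne', ENNReal.rpow_one, ← div_eq_mul_inv]
    simp_rw [hpt]
    rw [lintegral_half' μ f _ _, ← lorentz_pow μ p₁ q₁ f hq₁0 hq₁T]
  have hE2 : ∫⁻ s in Set.Ioi (0:ℝ), φ₂ s ^ r₂ = (lorentzNorm μ p₂ q₂ g) ^ q₂.toReal := by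
    have hpt : ∀ s : ℝ, φ₂ s ^ r₂ = (ENNReal.ofReal (s/2) ^ (1/p₂).toReal
        * rearrangement μ g (ENNReal.ofReal (s/2))) ^ q₂.toReal / ENNReal.ofReal s := by
      intro s
      rw [hφ₂def, ENNReal.mul_rpow_of_nonneg _ _ hr₂0.le, ← ENNReal.rpow_mul,
        ← ENNReal.rpow_mul, show q.toReal * r₂ = q₂.toReal by rw [hr₂def]; field_simp,
        inv_mul_cancel₀ hr₂0.ne', ENNReal.rpow_one, ← div_eq_mul_inv]
    simp_rw [hpt]
    rw [lintegral_half' μ g _ _, ← lorentz_pow μ p₂ q₂ g hq₂0 hq₂T]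
  calc (∫⁻ s in Set.Ioi (0:ℝ), _)
      = ∫⁻ s in Set.Ioi (0:ℝ), φ₁ s * φ₂ s := lintegral_congr hptw
    _ ≤ (∫⁻ s in Set.Ioi (0:ℝ), φ₁ s ^ r₁) ^ (1/r₁)
          * (∫⁻ s in Set.Ioi (0:ℝ), φ₂ s ^ r₂) ^ (1/r₂) := by
        simpa [Pi.mul_apply] using holder
    _ = _ := by
        rw [hE1, hE2, ← ENNReal.rpow_mul, ← ENNReal.rpow_mul,
          show q₁.toReal * (1/r₁) = q.toReal by rw [one_div, hr₁def, inv_div]; field_simp,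
          show q₂.toReal * (1/r₂) = q.toReal by rw [one_div, hr₂def, inv_div]; field_simp]
lemma rearr_mem {α : Type*} [MeasurableSpace α] (μ : Measure α) (f : α → ℂ) (s : ℝ≥0∞) :
    μ {x | rearrangement μ f s < (‖f x‖₊ : ℝ≥0∞)} ≤ s := by
  set S := {t : ℝ≥0∞ | μ {x | t < (‖f x‖₊ : ℝ≥0∞)} ≤ s} with hS
  have hne : S.Nonempty := ⟨⊤, by simp [hS]⟩
  obtain ⟨u, hu_anti, hu_tendsto, hu_mem⟩ := exists_seq_tendsto_sInf hne (OrderBot.bddBelow S)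
  have hinf : rearrangement μ f s = ⨅ n, u n :=
    tendsto_nhds_unique hu_tendsto (tendsto_atTop_iInf hu_anti)
  have hset : {x | rearrangement μ f s < (‖f x‖₊ : ℝ≥0∞)}
      = ⋃ n, {x | u n < (‖f x‖₊ : ℝ≥0∞)} := by
    ext x
    simp [hinf, iInf_lt_iff]
  rw [hset]
  have hmono : Monotone (fun n => {x | u n < (‖f x‖₊ : ℝ≥0∞)}) :=
    fun m n hmn x hx => lt_of_le_of_lt (hu_anti hmn) hx
  rw [hmono.directed_le.measure_iUnion]
  exact iSup_le fun n => hu_mem n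

lemma rearr_mul {α : Type*} [MeasurableSpace α] (μ : Measure α) (f g : α → ℂ) (s t : ℝ≥0∞) :
    rearrangement μ (fun x => f x * g x) (s + t)
      ≤ rearrangement μ f s * rearrangement μ g t := by
  apply sInf_le
  show μ _ ≤ s + t
  have hsub : {x | rearrangement μ f s * rearrangement μ g t < (‖f x * g x‖₊ : ℝ≥0∞)}
      ⊆ {x | rearrangement μ f s < (‖f x‖₊ : ℝ≥0∞)}
        ∪ {x | rearrangement μ g t < (‖g x‖₊ : ℝ≥0∞)} := by
    intro x hx
    by_contra hc
    simp only [Set.mem_union, Set.mem_setOf_eq, not_or, not_lt] at hc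
    obtain ⟨h1, h2⟩ := hc
    have : (‖f x * g x‖₊ : ℝ≥0∞) ≤ rearrangement μ f s * rearrangement μ g t := by
      rw [nnnorm_mul, ENNReal.coe_mul]
      exact mul_le_mul' h1 h2
    exact absurd hx (not_lt.mpr this)
  calc μ {x | rearrangement μ f s * rearrangement μ g t < (‖f x * g x‖₊ : ℝ≥0∞)}
      ≤ μ ({x | rearrangement μ f s < (‖f x‖₊ : ℝ≥0∞)}
          ∪ {x | rearrangement μ g t < (‖g x‖₊ : ℝ≥0∞)}) := measure_mono hsub
    _ ≤ _ := (measure_union_le _ _).trans (add_le_add (rearr_mem μ f s) (rearr_mem μ g t))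


/-- Hölder's inequality in Lorentz spaces: if `1/p = 1/p₁ + 1/p₂`, `1/q = 1/q₁ + 1/q₂`,
then `‖fg‖_{L^{p,q}} ≤ C ‖f‖_{L^{p₁,q₁}} ‖g‖_{L^{p₂,q₂}}` (hence `fg ∈ L^{p,q}`). -/
theorem stmt_7 (n : ℕ) (p₁ p₂ q₁ q₂ p q : ℝ≥0∞)
    (hp₁ : 1 < p₁) (hp₁' : p₁ < ⊤) (hp₂ : 1 < p₂) (hp₂' : p₂ < ⊤)
    (hq₁ : 1 ≤ q₁) (hq₂ : 1 ≤ q₂) (hp : 1 ≤ p) (hp' : p < ⊤)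
    (hpe : 1 / p = 1 / p₁ + 1 / p₂) (hqe : 1 / q = 1 / q₁ + 1 / q₂) :
    ∃ C > (0 : ℝ), ∀ f g : EuclideanSpace ℝ (Fin n) → ℂ,
      AEStronglyMeasurable f volume → AEStronglyMeasurable g volume →
      lorentzNorm volume p₁ q₁ f < ⊤ → lorentzNorm volume p₂ q₂ g < ⊤ →
      lorentzNorm volume p q (fun x => f x * g x)
          ≤ ENNReal.ofReal C * lorentzNorm volume p₁ q₁ f * lorentzNorm volume p₂ q₂ g ∧
        lorentzNorm volume p q (fun x => f x * g x) < ⊤ := by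
  have hp₁0 : p₁ ≠ 0 := (zero_lt_one.trans hp₁).ne'
  have hp₂0 : p₂ ≠ 0 := (zero_lt_one.trans hp₂).ne'
  have hq₁0 : q₁ ≠ 0 := (zero_lt_one.trans_le hq₁).ne'
  have hq₂0 : q₂ ≠ 0 := (zero_lt_one.trans_le hq₂).ne'
  have h1p : (1/p).toReal = (1/p₁).toReal + (1/p₂).toReal := by
    rw [hpe, ENNReal.toReal_add (by simp [one_div, ENNReal.inv_ne_top, hp₁0])
      (by simp [one_div, ENNReal.inv_ne_top, hp₂0])]
  have hq0 : q ≠ 0 := by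
    intro h
    rw [h, ENNReal.div_zero one_ne_zero] at hqe
    have hfin : 1/q₁ + 1/q₂ ≠ ⊤ := by
      simp [one_div, ENNReal.add_ne_top, ENNReal.inv_ne_top, hq₁0, hq₂0]
    exact hfin hqe.symm
  refine ⟨2 ^ ((1/p₁).toReal + (1/p₂).toReal), by positivity, ?_⟩
  intro f g hfm hgm hA hB
  have key : ∀ s : ℝ, 0 < s →
      ENNReal.ofReal s ^ (1/p).toReal
          * rearrangement volume (fun x => f x * g x) (ENNReal.ofReal s)
        ≤ (2:ℝ≥0∞) ^ ((1/p₁).toReal + (1/p₂).toReal)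
          * ((ENNReal.ofReal (s/2) ^ (1/p₁).toReal
              * rearrangement volume f (ENNReal.ofReal (s/2)))
            * (ENNReal.ofReal (s/2) ^ (1/p₂).toReal
              * rearrangement volume g (ENNReal.ofReal (s/2)))) := by
    intro s hs
    have h2 : ENNReal.ofReal s = 2 * ENNReal.ofReal (s/2) := by
      rw [show (2:ℝ≥0∞) = ENNReal.ofReal 2 by norm_num,
        ← ENNReal.ofReal_mul (by norm_num : (0:ℝ) ≤ 2)]
      congr 1; ring
    have hsum : ENNReal.ofReal s = ENNReal.ofReal (s/2) + ENNReal.ofReal (s/2) := by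
      rw [← ENNReal.ofReal_add (by linarith) (by linarith)]
      congr 1; ring
    calc ENNReal.ofReal s ^ (1/p).toReal
          * rearrangement volume (fun x => f x * g x) (ENNReal.ofReal s)
        ≤ ENNReal.ofReal s ^ (1/p).toReal *
            (rearrangement volume f (ENNReal.ofReal (s/2))
              * rearrangement volume g (ENNReal.ofReal (s/2))) := by
          refine mul_le_mul_right ?_ _
          rw [hsum]
          exact rearr_mul volume f g _ _
      _ = _ := by
          rw [h1p, h2, ENNReal.mul_rpow_of_nonneg _ _ (by positivity),
            ENNReal.rpow_add_of_nonneg _ _ ENNReal.toReal_nonneg ENNReal.toReal_nonneg,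
            ENNReal.rpow_add_of_nonneg _ _ ENNReal.toReal_nonneg ENNReal.toReal_nonneg]
          ring
  have main : lorentzNorm volume p q (fun x => f x * g x)
      ≤ (2:ℝ≥0∞) ^ ((1/p₁).toReal + (1/p₂).toReal)
        * lorentzNorm volume p₁ q₁ f * lorentzNorm volume p₂ q₂ g := by
    by_cases hqT : q = ⊤
    · -- q = ⊤ : then q₁ = q₂ = ⊤
      rw [hqT] at hqe
      simp only [one_div, ENNReal.inv_top] at hqe
      have h0 := add_eq_zero.mp hqe.symm
      have hq₁T : q₁ = ⊤ := ENNReal.inv_eq_zero.mp h0.1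
      have hq₂T : q₂ = ⊤ := ENNReal.inv_eq_zero.mp h0.2
      rw [hqT, hq₁T, hq₂T, lorentzNorm, if_pos rfl]
      refine iSup₂_le fun s hs => ?_
      calc ENNReal.ofReal s ^ (1/p).toReal
            * rearrangement volume (fun x => f x * g x) (ENNReal.ofReal s)
          ≤ _ := key s hs
        _ ≤ (2:ℝ≥0∞) ^ ((1/p₁).toReal + (1/p₂).toReal)
              * (lorentzNorm volume p₁ ⊤ f * lorentzNorm volume p₂ ⊤ g) := by
            refine mul_le_mul_right (mul_le_mul' ?_ ?_) _
            · exact lorentz_top_le volume p₁ f (half_pos hs)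
            · exact lorentz_top_le volume p₂ g (half_pos hs)
        _ = _ := (mul_assoc _ _ _).symm
    · -- q finite
      have hqr : 0 < q.toReal := ENNReal.toReal_pos hq0 hqT
      have ptb : ∀ s : ℝ, s ∈ Set.Ioi (0:ℝ) →
          (ENNReal.ofReal s ^ (1/p).toReal
              * rearrangement volume (fun x => f x * g x) (ENNReal.ofReal s)) ^ q.toReal
              / ENNReal.ofReal s
            ≤ (2:ℝ≥0∞) ^ (((1/p₁).toReal + (1/p₂).toReal) * q.toReal)
              * (((ENNReal.ofReal (s/2) ^ (1/p₁).toReal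
                    * rearrangement volume f (ENNReal.ofReal (s/2))) ^ q.toReal
                  * (ENNReal.ofReal (s/2) ^ (1/p₂).toReal
                    * rearrangement volume g (ENNReal.ofReal (s/2))) ^ q.toReal)
                / ENNReal.ofReal s) := by
        intro s hs
        calc (ENNReal.ofReal s ^ (1/p).toReal
              * rearrangement volume (fun x => f x * g x) (ENNReal.ofReal s)) ^ q.toReal
              / ENNReal.ofReal s
            ≤ ((2:ℝ≥0∞) ^ ((1/p₁).toReal + (1/p₂).toReal)
                * ((ENNReal.ofReal (s/2) ^ (1/p₁).toReal
                    * rearrangement volume f (ENNReal.ofReal (s/2)))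
                  * (ENNReal.ofReal (s/2) ^ (1/p₂).toReal
                    * rearrangement volume g (ENNReal.ofReal (s/2))))) ^ q.toReal
                / ENNReal.ofReal s :=
              ENNReal.div_le_div_right (ENNReal.rpow_le_rpow (key s hs) hqr.le) _
          _ = _ := by
              rw [ENNReal.mul_rpow_of_nonneg _ _ hqr.le, ENNReal.mul_rpow_of_nonneg _ _ hqr.le,
                ← ENNReal.rpow_mul, mul_div_assoc]
      have hJ : (∫⁻ s in Set.Ioi (0:ℝ),
          ((ENNReal.ofReal (s/2) ^ (1/p₁).toReal
                * rearrangement volume f (ENNReal.ofReal (s/2))) ^ q.toReal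
            * (ENNReal.ofReal (s/2) ^ (1/p₂).toReal
                * rearrangement volume g (ENNReal.ofReal (s/2))) ^ q.toReal)
            / ENNReal.ofReal s)
          ≤ (lorentzNorm volume p₁ q₁ f) ^ q.toReal
            * (lorentzNorm volume p₂ q₂ g) ^ q.toReal := by
        by_cases hq₁T : q₁ = ⊤
        · have hqq : q = q₂ := by
            rw [hq₁T] at hqe
            simp only [one_div, ENNReal.inv_top, zero_add] at hqe
            simpa using congrArg (·⁻¹) hqe
          rw [hq₁T, ← hqq]
          exact J_le_top_left volume f g p₁ p₂ q hq0 hqT (hq₁T ▸ hA)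
        · by_cases hq₂T : q₂ = ⊤
          · have hqq : q = q₁ := by
              rw [hq₂T] at hqe
              simp only [one_div, ENNReal.inv_top, add_zero] at hqe
              simpa using congrArg (·⁻¹) hqe
            rw [hq₂T, ← hqq]
            exact J_le_top_right volume f g p₁ p₂ q hq0 hqT (hq₂T ▸ hB)
          · have hr' : q.toReal⁻¹ = q₁.toReal⁻¹ + q₂.toReal⁻¹ := by
              have h := congrArg ENNReal.toReal hqe
              rwa [ENNReal.toReal_add (by simp [one_div, ENNReal.inv_ne_top, hq₁0])
                  (by simp [one_div, ENNReal.inv_ne_top, hq₂0]), one_div, one_div, one_div,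
                ENNReal.toReal_inv, ENNReal.toReal_inv, ENNReal.toReal_inv] at h
            exact J_le_holder volume f g p₁ p₂ q₁ q₂ q hq₁0 hq₁T hq₂0 hq₂T hq0 hqT hr'
      have hI : (∫⁻ s in Set.Ioi (0:ℝ),
          (ENNReal.ofReal s ^ (1/p).toReal
              * rearrangement volume (fun x => f x * g x) (ENNReal.ofReal s)) ^ q.toReal
              / ENNReal.ofReal s)
          ≤ ((2:ℝ≥0∞) ^ ((1/p₁).toReal + (1/p₂).toReal) * lorentzNorm volume p₁ q₁ f
              * lorentzNorm volume p₂ q₂ g) ^ q.toReal := by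
        calc (∫⁻ s in Set.Ioi (0:ℝ), _)
            ≤ ∫⁻ s in Set.Ioi (0:ℝ),
                (2:ℝ≥0∞) ^ (((1/p₁).toReal + (1/p₂).toReal) * q.toReal)
                * (((ENNReal.ofReal (s/2) ^ (1/p₁).toReal
                      * rearrangement volume f (ENNReal.ofReal (s/2))) ^ q.toReal
                    * (ENNReal.ofReal (s/2) ^ (1/p₂).toReal
                      * rearrangement volume g (ENNReal.ofReal (s/2))) ^ q.toReal)
                  / ENNReal.ofReal s) :=
              lintegral_mono_ae ((ae_restrict_iff' measurableSet_Ioi).2 (ae_of_all _ ptb))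
          _ = (2:ℝ≥0∞) ^ (((1/p₁).toReal + (1/p₂).toReal) * q.toReal)
                * ∫⁻ s in Set.Ioi (0:ℝ),
                  ((ENNReal.ofReal (s/2) ^ (1/p₁).toReal
                      * rearrangement volume f (ENNReal.ofReal (s/2))) ^ q.toReal
                    * (ENNReal.ofReal (s/2) ^ (1/p₂).toReal
                      * rearrangement volume g (ENNReal.ofReal (s/2))) ^ q.toReal)
                  / ENNReal.ofReal s :=
              lintegral_const_mul' _ _
                (ENNReal.rpow_ne_top_of_nonneg (by positivity) (by norm_num))
          _ ≤ (2:ℝ≥0∞) ^ (((1/p₁).toReal + (1/p₂).toReal) * q.toReal)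
                * ((lorentzNorm volume p₁ q₁ f) ^ q.toReal
                  * (lorentzNorm volume p₂ q₂ g) ^ q.toReal) := mul_le_mul_right hJ _
          _ = _ := by
              rw [ENNReal.mul_rpow_of_nonneg _ _ hqr.le, ENNReal.mul_rpow_of_nonneg _ _ hqr.le,
                ← ENNReal.rpow_mul, mul_assoc]
      rw [lorentzNorm, if_neg hqT, show (1/q).toReal = q.toReal⁻¹ by
        rw [one_div, ENNReal.toReal_inv]]
      calc (∫⁻ s in Set.Ioi (0:ℝ),
            (ENNReal.ofReal s ^ (1/p).toReal
              * rearrangement volume (fun x => f x * g x) (ENNReal.ofReal s)) ^ q.toReal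
              / ENNReal.ofReal s) ^ q.toReal⁻¹
          ≤ (((2:ℝ≥0∞) ^ ((1/p₁).toReal + (1/p₂).toReal) * lorentzNorm volume p₁ q₁ f
              * lorentzNorm volume p₂ q₂ g) ^ q.toReal) ^ q.toReal⁻¹ :=
            ENNReal.rpow_le_rpow hI (by positivity)
        _ = _ := by
            rw [← ENNReal.rpow_mul, mul_inv_cancel₀ hqr.ne', ENNReal.rpow_one]
  have hCo : ENNReal.ofReal ((2:ℝ) ^ ((1/p₁).toReal + (1/p₂).toReal))
      = (2:ℝ≥0∞) ^ ((1/p₁).toReal + (1/p₂).toReal) := by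
    rw [← ENNReal.ofReal_rpow_of_pos (by norm_num : (0:ℝ) < 2)]
    norm_num
  refine ⟨by rw [hCo]; exact main, lt_of_le_of_lt main ?_⟩
  exact ENNReal.mul_lt_top
    (ENNReal.mul_lt_top (ENNReal.rpow_lt_top_of_nonneg (by positivity) (by norm_num)) hA) hB
end

section
/- Let v : ℝ³ → ℝ satisfy M₁ := ‖(1+|x|)v‖_{L^∞} < ∞ and M₂ := ‖(1+|x|)²∇v‖_{L^∞} < ∞, and suppose ∇v ∈ L²(ℝ³). Then v belongs to the homogeneous Besov space Ḃ^{1/2}_{2,∞}(ℝ³), and sup_{h ≠ 0} |h|^{-1/2} ‖v(·+h) - v‖_{L²} ≤ C(‖∇v‖_{L²} + M₁ + M₂). -/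
open MeasureTheory
open scoped ENNReal

open Metric Set

local notation "E" => EuclideanSpace ℝ (Fin 3)
noncomputable def v1 : ℝ≥0∞ := volume (ball (0 : EuclideanSpace ℝ (Fin 3)) 1)

section copyprev
lemma exists_dyadic {t : ℝ} (ht : 1 ≤ t) : ∃ k : ℕ, (2:ℝ)^k ≤ t ∧ t < 2^(k+1) := by
  have hex : ∃ n : ℕ, t < 2^n := pow_unbounded_of_one_lt t one_lt_two
  classical
  let n := Nat.find hex
  have hn : t < 2^n := Nat.find_spec hex
  have hn0 : n ≠ 0 := by
    intro h0
    have : t < 1 := by simpa [h0] using hn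
    linarith
  refine ⟨n - 1, ?_, ?_⟩
  · exact not_lt.1 (Nat.find_min hex (m := n - 1) (Nat.sub_lt (Nat.pos_of_ne_zero hn0) one_pos))
  · have : n - 1 + 1 = n := Nat.succ_pred_eq_of_pos (Nat.pos_of_ne_zero hn0)
    rw [this]; exact hn

def Ann (k : ℕ) : Set (EuclideanSpace ℝ (Fin 3)) :=
  {y | (2:ℝ)^k ≤ 1 + ‖y‖ ∧ 1 + ‖y‖ < 2^(k+1)}

lemma measurable_one_add_norm : Measurable (fun y : E => 1 + ‖y‖) :=
  measurable_norm.const_add 1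

lemma measurableSet_Ann (k : ℕ) : MeasurableSet (Ann k) := by
  have : Ann k = (fun y : E => 1 + ‖y‖) ⁻¹' (Set.Ico ((2:ℝ)^k) (2^(k+1))) := rfl
  rw [this]
  exact measurable_one_add_norm measurableSet_Ico

lemma mem_Ann_exists (y : E) : ∃ k, y ∈ Ann k := by
  have h1 : (1:ℝ) ≤ 1 + ‖y‖ := by have := norm_nonneg y; linarith
  obtain ⟨k, hk1, hk2⟩ := exists_dyadic h1
  exact ⟨k, hk1, hk2⟩

lemma volume_Ann_le (k : ℕ) :
    volume (Ann k) ≤ ENNReal.ofReal (((2:ℝ)^(k+1))^3) * v1 := by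
  have hsub : Ann k ⊆ ball (0:E) ((2:ℝ)^(k+1)) := by
    intro y hy
    rcases hy with ⟨_, h2⟩
    have := norm_nonneg y
    simp only [mem_ball, dist_zero_right]
    linarith
  calc volume (Ann k) ≤ volume (ball (0:E) ((2:ℝ)^(k+1))) := measure_mono hsub
    _ = ENNReal.ofReal (((2:ℝ)^(k+1))^3) * v1 := by
        rw [Measure.addHaar_ball _ _ (by positivity), finrank_euclideanSpace_fin]; rfl

lemma lintegral_le_tsum_ann (f : EuclideanSpace ℝ (Fin 3) → ℝ≥0∞) (c : ℕ → ℝ≥0∞)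
    (h : ∀ k, ∀ y ∈ Ann k, f y ≤ c k) :
    ∫⁻ y, f y ≤ ∑' k, c k * (ENNReal.ofReal (((2:ℝ)^(k+1))^3) * v1) := by
  have hpt : ∀ y, f y ≤ ∑' k, (Ann k).indicator (fun _ => c k) y := by
    intro y
    obtain ⟨k, hk⟩ := mem_Ann_exists y
    calc f y ≤ c k := h k y hk
      _ = (Ann k).indicator (fun _ => c k) y := by rw [Set.indicator_of_mem hk]
      _ ≤ _ := ENNReal.le_tsum k
  calc ∫⁻ y, f y ≤ ∫⁻ y, ∑' k, (Ann k).indicator (fun _ => c k) y := lintegral_mono hpt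
    _ = ∑' k, ∫⁻ y, (Ann k).indicator (fun _ => c k) y :=
        lintegral_tsum (fun k => ((measurable_const.indicator (measurableSet_Ann k))).aemeasurable)
    _ ≤ _ := by
        refine ENNReal.tsum_le_tsum fun k => ?_
        rw [lintegral_indicator_const (measurableSet_Ann k)]
        exact mul_le_mul_right (volume_Ann_le k) _
end copyprev

lemma pow_arith (k : ℕ) : (((2:ℝ)^k)^2)⁻¹ * ((2:ℝ)^(k+1))^3 = 8 * 2^k := by
  have h : (0:ℝ) < 2^k := by positivity
  rw [pow_succ]
  field_simp
  ring

lemma pow_arith2 (k : ℕ) : ((((2:ℝ)^k)^2)⁻¹)^2 * ((2:ℝ)^(k+1))^3 = 8 * ((2:ℝ)^k)⁻¹ := by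
  have h : (0:ℝ) < 2^k := by positivity
  rw [pow_succ]
  field_simp
  ring

lemma lintegral_Phi {R : ℝ} (hR : 1 ≤ R) :
    ∫⁻ y : E, (if ‖y‖ ≤ 3*R then ENNReal.ofReal (((1+‖y‖)^2)⁻¹) else 0)
      ≤ ENNReal.ofReal (64*R) * v1 := by
  obtain ⟨m, hm1, hm2⟩ := exists_dyadic (show (1:ℝ) ≤ 4*R by linarith)
  set N := m + 1 with hN
  have hN1 : 4*R < 2^N := hm2
  have hN2 : (2:ℝ)^N ≤ 8*R := by
    rw [hN, pow_succ]; linarith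
  set c : ℕ → ℝ≥0∞ := fun k =>
    if (2:ℝ)^k ≤ 4*R then ENNReal.ofReal ((((2:ℝ)^k)^2)⁻¹) else 0 with hc
  have hbound : ∀ k, ∀ y ∈ Ann k,
      (if ‖y‖ ≤ 3*R then ENNReal.ofReal (((1+‖y‖)^2)⁻¹) else 0) ≤ c k := by
    intro k y hy
    rcases hy with ⟨h1, _⟩
    by_cases hy3 : ‖y‖ ≤ 3*R
    · rw [if_pos hy3]
      have hk4 : (2:ℝ)^k ≤ 4*R := by linarith
      simp only [hc]
      rw [if_pos hk4]
      apply ENNReal.ofReal_le_ofReal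
      have h2k : (0:ℝ) < 2^k := by positivity
      apply inv_anti₀ (by positivity)
      have : (2:ℝ)^k ≤ 1 + ‖y‖ := h1
      nlinarith
    · rw [if_neg hy3]; exact zero_le
  refine le_trans (lintegral_le_tsum_ann _ c hbound) ?_
  have hzero : ∀ k ∉ Finset.range N, c k * (ENNReal.ofReal (((2:ℝ)^(k+1))^3) * v1) = 0 := by
    intro k hk
    have hk' : N ≤ k := by simpa using hk
    have : ¬ ((2:ℝ)^k ≤ 4*R) := by
      push_neg
      calc (4:ℝ)*R < 2^N := hN1
        _ ≤ 2^k := by exact pow_le_pow_right₀ one_le_two hk'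
    rw [hc]; simp [this]
  rw [tsum_eq_sum hzero]
  have hterm : ∀ k, c k * (ENNReal.ofReal (((2:ℝ)^(k+1))^3) * v1)
      ≤ ENNReal.ofReal (8 * 2^k) * v1 := by
    intro k
    have : c k ≤ ENNReal.ofReal ((((2:ℝ)^k)^2)⁻¹) := by
      simp only [hc]; split_ifs <;> simp
    refine le_trans (mul_le_mul_left this _) ?_
    rw [← mul_assoc, ← ENNReal.ofReal_mul (by positivity), pow_arith k]
  calc (∑ k ∈ Finset.range N, c k * (ENNReal.ofReal (((2:ℝ)^(k+1))^3) * v1))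
      ≤ ∑ k ∈ Finset.range N, ENNReal.ofReal (8 * 2^k) * v1 :=
        Finset.sum_le_sum (fun k _ => hterm k)
    _ = (∑ k ∈ Finset.range N, ENNReal.ofReal (8 * 2^k)) * v1 := by rw [Finset.sum_mul]
    _ ≤ ENNReal.ofReal (64*R) * v1 := by
        refine mul_le_mul_left ?_ _
        rw [← ENNReal.ofReal_sum_of_nonneg (fun k _ => by positivity)]
        apply ENNReal.ofReal_le_ofReal
        have : (∑ k ∈ Finset.range N, 8 * (2:ℝ)^k) = 8 * (2^N - 1) := by
          rw [← Finset.mul_sum, geom_sum_eq (by norm_num) N]; norm_num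
        rw [this]; linarith

lemma lintegral_Psi {R : ℝ} (hR : 1 ≤ R) :
    ∫⁻ y : E, (if 2*R < ‖y‖ then ENNReal.ofReal ((((1+‖y‖)^2)⁻¹)^2) else 0)
      ≤ ENNReal.ofReal (32/R) * v1 := by
  obtain ⟨k₀, hk01, hk02⟩ := exists_dyadic (show (1:ℝ) ≤ 2*R by linarith)
  set c : ℕ → ℝ≥0∞ := fun k =>
    if 2*R < (2:ℝ)^(k+1) then ENNReal.ofReal (((((2:ℝ)^k)^2)⁻¹)^2) else 0 with hc
  have hbound : ∀ k, ∀ y ∈ Ann k,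
      (if 2*R < ‖y‖ then ENNReal.ofReal ((((1+‖y‖)^2)⁻¹)^2) else 0) ≤ c k := by
    intro k y hy
    rcases hy with ⟨h1, h2⟩
    by_cases hy3 : 2*R < ‖y‖
    · rw [if_pos hy3]
      have hny : (0:ℝ) ≤ ‖y‖ := norm_nonneg y
      have hcond : 2*R < (2:ℝ)^(k+1) := by linarith
      simp only [hc]
      rw [if_pos hcond]
      apply ENNReal.ofReal_le_ofReal
      have h2k : (0:ℝ) < 2^k := by positivity
      have hinv : ((1+‖y‖)^2)⁻¹ ≤ (((2:ℝ)^k)^2)⁻¹ := by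
        apply inv_anti₀ (by positivity)
        nlinarith
      have h0 : (0:ℝ) ≤ ((1+‖y‖)^2)⁻¹ := by positivity
      nlinarith
    · rw [if_neg hy3]; exact zero_le
  refine le_trans (lintegral_le_tsum_ann _ c hbound) ?_
  set g : ℕ → ℝ≥0∞ := fun k => c k * (ENNReal.ofReal (((2:ℝ)^(k+1))^3) * v1) with hg
  have hsplit : (∑ k ∈ Finset.range k₀, g k) + ∑' n : ℕ, g (n + k₀) = ∑' k, g k :=
    Summable.sum_add_tsum_nat_add' (f := g) (k := k₀) ENNReal.summable
  have hpre : ∀ k < k₀, g k = 0 := by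
    intro k hk
    have : (2:ℝ)^(k+1) ≤ 2^k₀ := pow_le_pow_right₀ one_le_two hk
    have : ¬ (2*R < (2:ℝ)^(k+1)) := by push_neg; linarith
    simp only [hg, hc]; simp [this]
  have htail : ∀ n : ℕ, g (n + k₀) ≤ ENNReal.ofReal (8 * ((2:ℝ)^k₀)⁻¹) * (ENNReal.ofReal 2⁻¹)^n * v1 := by
    intro n
    have hck : c (n + k₀) ≤ ENNReal.ofReal (((((2:ℝ)^(n+k₀))^2)⁻¹)^2) := by
      simp only [hc]; split_ifs <;> simp
    rw [hg]
    refine le_trans (mul_le_mul_left hck _) ?_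
    rw [← mul_assoc, ← ENNReal.ofReal_mul (by positivity), pow_arith2 (n+k₀)]
    refine mul_le_mul_left ?_ _
    rw [← ENNReal.ofReal_pow (by norm_num), ← ENNReal.ofReal_mul (by positivity)]
    apply ENNReal.ofReal_le_ofReal
    rw [pow_add]
    have h1 : (0:ℝ) < 2^n := by positivity
    have h2 : (0:ℝ) < 2^k₀ := by positivity
    rw [mul_inv]
    rw [inv_pow]
    ring_nf
    exact le_refl _
  calc (∑' k, g k) = (∑ k ∈ Finset.range k₀, g k) + ∑' n : ℕ, g (n + k₀) := hsplit.symm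
    _ = ∑' n : ℕ, g (n + k₀) := by
        rw [Finset.sum_eq_zero (fun k hk => hpre k (Finset.mem_range.1 hk)), zero_add]
    _ ≤ ∑' n : ℕ, ENNReal.ofReal (8 * ((2:ℝ)^k₀)⁻¹) * (ENNReal.ofReal 2⁻¹)^n * v1 :=
        ENNReal.tsum_le_tsum htail
    _ = ENNReal.ofReal (8 * ((2:ℝ)^k₀)⁻¹) * (∑' n : ℕ, (ENNReal.ofReal 2⁻¹)^n) * v1 := by
        rw [ENNReal.tsum_mul_right, ENNReal.tsum_mul_left]
    _ ≤ ENNReal.ofReal (32/R) * v1 := by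
        refine mul_le_mul_left ?_ _
        have hgeo : (∑' n : ℕ, (ENNReal.ofReal 2⁻¹)^n) = 2 := by
          have : ENNReal.ofReal (2⁻¹:ℝ) = 2⁻¹ := by
            rw [ENNReal.ofReal_inv_of_pos (by norm_num)]; norm_num
          rw [this, ENNReal.tsum_geometric, ENNReal.one_sub_inv_two, inv_inv]
        rw [hgeo]
        have h2 : (2:ℝ≥0∞) = ENNReal.ofReal 2 := by norm_num
        rw [h2, ← ENNReal.ofReal_mul (by positivity)]
        apply ENNReal.ofReal_le_ofReal
        have h2k : (0:ℝ) < 2^k₀ := by positivity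
        have hRk : R < 2^k₀ := by
          rw [pow_succ] at hk02; linarith
        have : ((2:ℝ)^k₀)⁻¹ ≤ R⁻¹ := by
          apply inv_anti₀ (by linarith) hRk.le
        calc 8 * ((2:ℝ)^k₀)⁻¹ * 2 = 16 * ((2:ℝ)^k₀)⁻¹ := by ring
          _ ≤ 16 * R⁻¹ := by nlinarith
          _ ≤ 32 / R := by rw [div_eq_mul_inv]; nlinarith [inv_nonneg.2 (show (0:ℝ) ≤ R by linarith)]

lemma enorm_sq_le {r g : ℝ} (hg : 0 ≤ g) (h : |r| ≤ g) :
    (‖r‖₊ : ℝ≥0∞) ^ (2:ℝ) ≤ ENNReal.ofReal (g^2) :=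
  calc (‖r‖₊ : ℝ≥0∞) ^ (2:ℝ) = ENNReal.ofReal (|r| ^ (2:ℝ)) := by
        rw [show (‖r‖₊ : ℝ≥0∞) = ‖r‖ₑ from rfl, Real.enorm_eq_ofReal_abs, ENNReal.ofReal_rpow_of_nonneg (abs_nonneg r) (by norm_num)]
    _ ≤ ENNReal.ofReal (g^2) := ENNReal.ofReal_le_ofReal (by
        rw [show ((2:ℝ)) = ((2:ℕ):ℝ) by norm_num, Real.rpow_natCast]
        exact pow_le_pow_left₀ (abs_nonneg r) h 2)

lemma eLpNorm_two_le {f : EuclideanSpace ℝ (Fin 3) → ℝ} {B : ℝ≥0∞}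
    (h : ∫⁻ x, ((‖f x‖₊ : ℝ≥0∞)) ^ (2:ℝ) ∂volume ≤ B) :
    eLpNorm f 2 volume ≤ B ^ ((1:ℝ)/2) := by
  rw [eLpNorm_eq_lintegral_rpow_enorm_toReal two_ne_zero ENNReal.ofNat_ne_top]
  have h2 : ((2:ℝ≥0∞)).toReal = 2 := by norm_num
  rw [h2]
  exact ENNReal.rpow_le_rpow h (by norm_num)

lemma mvt_seg (v : EuclideanSpace ℝ (Fin 3) → ℝ) (hv : Differentiable ℝ v) {x h : E} {B : ℝ}
    (hB : ∀ y ∈ segment ℝ x (x+h), ‖fderiv ℝ v y‖ ≤ B) : |v (x+h) - v x| ≤ B * ‖h‖ := by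
  have := (convex_segment x (x+h)).norm_image_sub_le_of_norm_fderiv_le
    (fun y _ => hv.differentiableAt) hB
    (left_mem_segment ℝ x (x+h)) (right_mem_segment ℝ x (x+h))
  simpa [Real.norm_eq_abs, add_sub_cancel_left] using this

lemma seg_norm_le {x h y : E} (hy : y ∈ segment ℝ x (x+h)) : ‖x‖ ≤ ‖y‖ + ‖h‖ := by
  rw [segment_eq_image'] at hy
  obtain ⟨t, ht, rfl⟩ := hy
  rw [add_sub_cancel_left]
  have h1 : ‖x + t • h - t • h‖ ≤ ‖x + t • h‖ + ‖t • h‖ := norm_sub_le _ _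
  have h2 : x + t • h - t • h = x := by abel
  rw [h2] at h1
  have h3 : ‖t • h‖ ≤ ‖h‖ := by
    rw [norm_smul, Real.norm_eq_abs, abs_of_nonneg ht.1]
    nlinarith [norm_nonneg h, ht.2]
  linarith

lemma grad_pointwise (v : EuclideanSpace ℝ (Fin 3) → ℝ) (hv : Differentiable ℝ v) (M₂ : ℝ)
    (h₂ : ∀ x : E, (1+‖x‖)^2 * ‖fderiv ℝ v x‖ ≤ M₂) {x h : E}
    (hcase : ‖h‖ ≤ 1 ∨ 2*‖h‖ < ‖x‖) :
    |v (x+h) - v x| ≤ 4*M₂*(((1+‖x‖)^2)⁻¹) * ‖h‖ := by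
  apply mvt_seg v hv
  intro y hy
  have hxy := seg_norm_le hy
  have hyn : (0:ℝ) ≤ ‖y‖ := norm_nonneg y
  have hxn := norm_nonneg x
  have hhn := norm_nonneg h
  have hkey : 1 + ‖x‖ ≤ 2*(1+‖y‖) := by
    rcases hcase with hc | hc
    · linarith
    · linarith
  have hy2 := h₂ y
  have hfn : (0:ℝ) ≤ ‖fderiv ℝ v y‖ := norm_nonneg _
  have hx2 : (0:ℝ) < (1+‖x‖)^2 := by positivity
  rw [show 4*M₂*(((1+‖x‖)^2)⁻¹) = (4*M₂)/((1+‖x‖)^2) by ring, le_div_iff₀ hx2]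
  have hsq : (1+‖x‖)^2 ≤ 4*(1+‖y‖)^2 := by nlinarith
  nlinarith [mul_le_mul_of_nonneg_left hsq hfn]

lemma val_pointwise (v : EuclideanSpace ℝ (Fin 3) → ℝ) (M₁ : ℝ)
    (h₁ : ∀ x : E, (1+‖x‖) * |v x| ≤ M₁) (x : E) : |v x| ≤ M₁ * (1+‖x‖)⁻¹ := by
  have hx : (0:ℝ) < 1+‖x‖ := by positivity
  have := h₁ x
  rw [show M₁ * (1+‖x‖)⁻¹ = M₁ / (1+‖x‖) by ring, le_div_iff₀ hx]
  linarith [this]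

noncomputable def cI : ℝ≥0∞ :=
  ∫⁻ x : EuclideanSpace ℝ (Fin 3), ENNReal.ofReal ((((1+‖x‖)^2)⁻¹)^2)

lemma cI_lt_top : cI < ⊤ := by
  have h4 : ((Module.finrank ℝ (EuclideanSpace ℝ (Fin 3)) : ℝ)) < 4 := by
    rw [finrank_euclideanSpace_fin]; norm_num
  have hfin := finite_integral_one_add_norm (μ := (volume : Measure E)) (r := 4) h4
  have heq : ∀ x : E, (((1+‖x‖)^2)⁻¹)^2 = (1+‖x‖) ^ (-(4:ℝ)) := by
    intro x
    have h0 : (0:ℝ) < 1+‖x‖ := by positivity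
    rw [Real.rpow_neg h0.le, show ((4:ℝ)) = ((4:ℕ):ℝ) by norm_num, Real.rpow_natCast]
    field_simp
  rw [cI]
  calc (∫⁻ x : E, ENNReal.ofReal ((((1+‖x‖)^2)⁻¹)^2))
      = ∫⁻ x : E, ENNReal.ofReal ((1+‖x‖) ^ (-(4:ℝ))) := by
        apply lintegral_congr; intro x; rw [heq x]
    _ < ⊤ := hfin

noncomputable def CC : ℝ≥0∞ :=
  ENNReal.ofReal 4 * cI ^ ((1:ℝ)/2) + ENNReal.ofReal 32 * v1 ^ ((1:ℝ)/2)

lemma CC_lt_top : CC < ⊤ := by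
  rw [CC]
  have h1 : cI ^ ((1:ℝ)/2) < ⊤ := ENNReal.rpow_lt_top_of_nonneg (by norm_num) cI_lt_top.ne
  have h2 : v1 ^ ((1:ℝ)/2) < ⊤ :=
    ENNReal.rpow_lt_top_of_nonneg (by norm_num) (measure_ball_lt_top).ne
  exact ENNReal.add_lt_top.2 ⟨ENNReal.mul_lt_top ENNReal.ofReal_lt_top h1,
    ENNReal.mul_lt_top ENNReal.ofReal_lt_top h2⟩

lemma key_est (v : EuclideanSpace ℝ (Fin 3) → ℝ) (M₁ M₂ : ℝ) (hv : Differentiable ℝ v)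
    (h₁ : ∀ x : E, (1+‖x‖) * |v x| ≤ M₁) (h₂ : ∀ x : E, (1+‖x‖)^2 * ‖fderiv ℝ v x‖ ≤ M₂)
    (h : E) (hh : h ≠ 0) :
    eLpNorm (fun x => v (x+h) - v x) 2 volume ≤
      CC * ENNReal.ofReal ((M₁+M₂) * ‖h‖ ^ ((1:ℝ)/2)) := by
  have hM₁ : 0 ≤ M₁ := le_trans (by positivity) (h₁ 0)
  have hM₂ : 0 ≤ M₂ := le_trans (by positivity) (h₂ 0)
  have hpos : (0:ℝ) < ‖h‖ := norm_pos_iff.2 hh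
  rcases le_total ‖h‖ 1 with hsm | hlg
  · -- small h
    have hpt : ∀ x : E, ((‖v (x+h) - v x‖₊ : ℝ≥0∞)) ^ (2:ℝ) ≤
        ENNReal.ofReal ((4*M₂*‖h‖)^2) * ENNReal.ofReal ((((1+‖x‖)^2)⁻¹)^2) := by
      intro x
      have hg := grad_pointwise v hv M₂ h₂ (x := x) (h := h) (Or.inl hsm)
      refine le_trans (enorm_sq_le (by positivity) hg) ?_
      rw [← ENNReal.ofReal_mul (by positivity)]
      exact ENNReal.ofReal_le_ofReal (le_of_eq (by ring))
    have hint : ∫⁻ x, ((‖v (x+h) - v x‖₊ : ℝ≥0∞)) ^ (2:ℝ) ∂volume ≤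
        ENNReal.ofReal ((4*M₂*‖h‖)^2) * cI := by
      calc ∫⁻ x, ((‖v (x+h) - v x‖₊ : ℝ≥0∞)) ^ (2:ℝ) ∂volume
          ≤ ∫⁻ x, ENNReal.ofReal ((4*M₂*‖h‖)^2) * ENNReal.ofReal ((((1+‖x‖)^2)⁻¹)^2) ∂volume :=
            lintegral_mono hpt
        _ = ENNReal.ofReal ((4*M₂*‖h‖)^2) * cI := by
            rw [lintegral_const_mul' _ _ ENNReal.ofReal_ne_top]; rfl
    refine le_trans (eLpNorm_two_le hint) ?_
    have hs : (0:ℝ) ≤ 4*M₂*‖h‖ := by positivity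
    have hsplit : (ENNReal.ofReal ((4*M₂*‖h‖)^2) * cI) ^ ((1:ℝ)/2)
        = ENNReal.ofReal (4*M₂*‖h‖) * cI ^ ((1:ℝ)/2) := by
      rw [ENNReal.mul_rpow_of_nonneg _ _ (by norm_num : (0:ℝ) ≤ 1/2),
        ENNReal.ofReal_rpow_of_nonneg (by positivity) (by norm_num)]
      congr 2
      rw [← Real.rpow_natCast (4*M₂*‖h‖) 2, ← Real.rpow_mul hs]
      norm_num
    rw [hsplit]
    have h1 : 4*M₂*‖h‖ ≤ 4 * ((M₁+M₂) * ‖h‖ ^ ((1:ℝ)/2)) := by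
      have hle : ‖h‖ ≤ ‖h‖ ^ ((1:ℝ)/2) := by
        nth_rewrite 1 [show ‖h‖ = ‖h‖ ^ (1:ℝ) by rw [Real.rpow_one]]
        exact Real.rpow_le_rpow_of_exponent_ge hpos hsm (by norm_num)
      have h2 : M₂ * ‖h‖ ≤ (M₁+M₂) * ‖h‖ ^ ((1:ℝ)/2) := by
        apply mul_le_mul (by linarith) hle (by positivity) (by linarith)
      linarith
    calc ENNReal.ofReal (4*M₂*‖h‖) * cI ^ ((1:ℝ)/2)
        ≤ ENNReal.ofReal (4 * ((M₁+M₂) * ‖h‖ ^ ((1:ℝ)/2))) * cI ^ ((1:ℝ)/2) :=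
          mul_le_mul_left (ENNReal.ofReal_le_ofReal h1) _
      _ = (ENNReal.ofReal 4 * cI ^ ((1:ℝ)/2)) * ENNReal.ofReal ((M₁+M₂) * ‖h‖ ^ ((1:ℝ)/2)) := by
          rw [ENNReal.ofReal_mul (by norm_num)]; ring
      _ ≤ CC * ENNReal.ofReal ((M₁+M₂) * ‖h‖ ^ ((1:ℝ)/2)) :=
          mul_le_mul_left le_self_add _
  · -- large h
    set R := ‖h‖ with hR
    set Φ : EuclideanSpace ℝ (Fin 3) → ℝ≥0∞ :=
      fun y => if ‖y‖ ≤ 3*R then ENNReal.ofReal (((1+‖y‖)^2)⁻¹) else 0 with hΦ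
    set Ψ : EuclideanSpace ℝ (Fin 3) → ℝ≥0∞ :=
      fun y => if 2*R < ‖y‖ then ENNReal.ofReal ((((1+‖y‖)^2)⁻¹)^2) else 0 with hΨ
    have hΦm : Measurable Φ := by
      apply Measurable.ite (measurableSet_le measurable_norm measurable_const)
      · exact ((measurable_one_add_norm.pow_const 2).inv).ennreal_ofReal
      · exact measurable_const
    have hΨm : Measurable Ψ := by
      apply Measurable.ite (measurableSet_lt measurable_const measurable_norm)
      · exact (((measurable_one_add_norm.pow_const 2).inv).pow_const 2).ennreal_ofReal
      · exact measurable_const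
    have hpt : ∀ x : E, ((‖v (x+h) - v x‖₊ : ℝ≥0∞)) ^ (2:ℝ) ≤
        ENNReal.ofReal (2*M₁^2) * Φ (x+h) +
          (ENNReal.ofReal (2*M₁^2) * Φ x + ENNReal.ofReal ((4*M₂*R)^2) * Ψ x) := by
      intro x
      have hxn := norm_nonneg x
      by_cases hx : ‖x‖ ≤ 2*R
      · have ha := val_pointwise v M₁ h₁ (x+h)
        have hb := val_pointwise v M₁ h₁ x
        have hd : |v (x+h) - v x| ≤ M₁*(1+‖x+h‖)⁻¹ + M₁*(1+‖x‖)⁻¹ :=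
          le_trans (abs_sub _ _) (add_le_add ha hb)
        have hxh3 : ‖x+h‖ ≤ 3*R := le_trans (norm_add_le x h) (by rw [hR]; linarith)
        have step := enorm_sq_le (g := M₁*(1+‖x+h‖)⁻¹ + M₁*(1+‖x‖)⁻¹) (by positivity) hd
        refine le_trans step ?_
        have hineq : (M₁*(1+‖x+h‖)⁻¹ + M₁*(1+‖x‖)⁻¹)^2 ≤
            2*M₁^2 * ((1+‖x+h‖)^2)⁻¹ + 2*M₁^2 * ((1+‖x‖)^2)⁻¹ := by
          have e1 : (M₁*(1+‖x+h‖)⁻¹)^2 = M₁^2 * ((1+‖x+h‖)^2)⁻¹ := by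
            rw [mul_pow, inv_pow]
          have e2 : (M₁*(1+‖x‖)⁻¹)^2 = M₁^2 * ((1+‖x‖)^2)⁻¹ := by
            rw [mul_pow, inv_pow]
          nlinarith [sq_nonneg (M₁*(1+‖x+h‖)⁻¹ - M₁*(1+‖x‖)⁻¹)]
        refine le_trans (ENNReal.ofReal_le_ofReal hineq) ?_
        rw [ENNReal.ofReal_add (by positivity) (by positivity)]
        refine add_le_add ?_ (le_trans ?_ le_self_add)
        · rw [hΦ]; simp only
          rw [if_pos hxh3, ← ENNReal.ofReal_mul (by positivity)]
        · rw [hΦ]; simp only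
          rw [if_pos (le_trans hx (by linarith [show (1:ℝ) ≤ R from hlg])),
            ← ENNReal.ofReal_mul (by positivity)]
      · push_neg at hx
        have hg := grad_pointwise v hv M₂ h₂ (x := x) (h := h) (Or.inr hx)
        have step := enorm_sq_le (g := 4*M₂*(((1+‖x‖)^2)⁻¹) * R) (by positivity) hg
        refine le_trans step ?_
        refine le_trans ?_ (le_add_left (le_add_left (le_refl _)))
        rw [hΨ]; simp only
        rw [if_pos hx, ← ENNReal.ofReal_mul (by positivity)]
        exact ENNReal.ofReal_le_ofReal (le_of_eq (by ring))
    have hint : ∫⁻ x, ((‖v (x+h) - v x‖₊ : ℝ≥0∞)) ^ (2:ℝ) ∂volume ≤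
        ENNReal.ofReal ((32*(M₁+M₂)*R ^ ((1:ℝ)/2))^2) * v1 := by
      have hR0 : (0:ℝ) < R := hpos
      have hR1 : (1:ℝ) ≤ R := hlg
      have hΦint : ∫⁻ y, Φ y ≤ ENNReal.ofReal (64*R) * v1 := lintegral_Phi hR1
      have hΨint : ∫⁻ y, Ψ y ≤ ENNReal.ofReal (32/R) * v1 := lintegral_Psi hR1
      calc ∫⁻ x, ((‖v (x+h) - v x‖₊ : ℝ≥0∞)) ^ (2:ℝ) ∂volume
          ≤ ∫⁻ x, (ENNReal.ofReal (2*M₁^2) * Φ (x+h) +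
              (ENNReal.ofReal (2*M₁^2) * Φ x + ENNReal.ofReal ((4*M₂*R)^2) * Ψ x)) ∂volume :=
            lintegral_mono hpt
        _ = (∫⁻ x, ENNReal.ofReal (2*M₁^2) * Φ (x+h) ∂volume) +
            ((∫⁻ x, ENNReal.ofReal (2*M₁^2) * Φ x ∂volume) +
              (∫⁻ x, ENNReal.ofReal ((4*M₂*R)^2) * Ψ x ∂volume)) := by
            have hm1 : Measurable (fun x : E => ENNReal.ofReal (2*M₁^2) * Φ (x + h)) :=
              (hΦm.comp (measurable_add_const h)).const_mul _
            have hm2 : Measurable (fun x : E => ENNReal.ofReal (2*M₁^2) * Φ x) :=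
              hΦm.const_mul _
            rw [lintegral_add_left hm1, lintegral_add_left hm2]
        _ = ENNReal.ofReal (2*M₁^2) * (∫⁻ x, Φ (x+h) ∂volume) +
            (ENNReal.ofReal (2*M₁^2) * (∫⁻ y, Φ y) + ENNReal.ofReal ((4*M₂*R)^2) * ∫⁻ y, Ψ y) := by
            rw [lintegral_const_mul' _ _ ENNReal.ofReal_ne_top,
              lintegral_const_mul' _ _ ENNReal.ofReal_ne_top,
              lintegral_const_mul' _ _ ENNReal.ofReal_ne_top]
        _ = ENNReal.ofReal (2*M₁^2) * (∫⁻ y, Φ y) +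
            (ENNReal.ofReal (2*M₁^2) * (∫⁻ y, Φ y) + ENNReal.ofReal ((4*M₂*R)^2) * ∫⁻ y, Ψ y) := by
            rw [lintegral_add_right_eq_self Φ h]
        _ ≤ ENNReal.ofReal (2*M₁^2) * (ENNReal.ofReal (64*R) * v1) +
            (ENNReal.ofReal (2*M₁^2) * (ENNReal.ofReal (64*R) * v1) +
              ENNReal.ofReal ((4*M₂*R)^2) * (ENNReal.ofReal (32/R) * v1)) := by
            gcongr
        _ ≤ ENNReal.ofReal ((32*(M₁+M₂)*R ^ ((1:ℝ)/2))^2) * v1 := by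
            simp only [← mul_assoc]
            rw [← ENNReal.ofReal_mul (by positivity : (0:ℝ) ≤ 2*M₁^2),
              ← ENNReal.ofReal_mul (by positivity : (0:ℝ) ≤ (4*M₂*R)^2), ← add_mul, ← add_mul,
              ← ENNReal.ofReal_add (by positivity) (by positivity),
              ← ENNReal.ofReal_add (by positivity) (by positivity)]
            refine mul_le_mul_left (ENNReal.ofReal_le_ofReal ?_) _
            have hsq : (R ^ ((1:ℝ)/2))^2 = R := by
              rw [← Real.rpow_natCast (R ^ ((1:ℝ)/2)) 2, ← Real.rpow_mul hR0.le]
              norm_num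
            have hdiv : (4*M₂*R)^2 * (32/R) = 512*M₂^2*R := by
              field_simp
              ring
            rw [hdiv]
            have hexp : (32*(M₁+M₂)*R ^ ((1:ℝ)/2))^2 = 1024*(M₁+M₂)^2*R := by
              rw [mul_pow, mul_pow, hsq]; ring
            rw [hexp]
            nlinarith [mul_nonneg hM₁ hM₂, hR0.le, mul_nonneg (mul_nonneg hM₁ hM₂) hR0.le]
    refine le_trans (eLpNorm_two_le hint) ?_
    have hs : (0:ℝ) ≤ 32*(M₁+M₂)*R ^ ((1:ℝ)/2) := by positivity
    have hsplit : (ENNReal.ofReal ((32*(M₁+M₂)*R ^ ((1:ℝ)/2))^2) * v1) ^ ((1:ℝ)/2)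
        = ENNReal.ofReal (32*(M₁+M₂)*R ^ ((1:ℝ)/2)) * v1 ^ ((1:ℝ)/2) := by
      rw [ENNReal.mul_rpow_of_nonneg _ _ (by norm_num : (0:ℝ) ≤ 1/2),
        ENNReal.ofReal_rpow_of_nonneg (by positivity) (by norm_num)]
      congr 2
      rw [← Real.rpow_natCast (32*(M₁+M₂)*R ^ ((1:ℝ)/2)) 2, ← Real.rpow_mul hs]
      norm_num
    rw [hsplit]
    calc ENNReal.ofReal (32*(M₁+M₂)*R ^ ((1:ℝ)/2)) * v1 ^ ((1:ℝ)/2)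
        = (ENNReal.ofReal 32 * v1 ^ ((1:ℝ)/2)) * ENNReal.ofReal ((M₁+M₂) * R ^ ((1:ℝ)/2)) := by
          rw [show (32:ℝ)*(M₁+M₂)*R ^ ((1:ℝ)/2) = 32 * ((M₁+M₂)*R ^ ((1:ℝ)/2)) by ring,
            ENNReal.ofReal_mul (by norm_num)]
          ring
      _ ≤ CC * ENNReal.ofReal ((M₁+M₂) * R ^ ((1:ℝ)/2)) := mul_le_mul_left le_add_self _


/-- If `(1+|x|)v` and `(1+|x|)²∇v` are bounded on `ℝ³` and `∇v ∈ L²`, then `v` lies in the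
homogeneous Besov space `Ḃ^{1/2}_{2,∞}(ℝ³)` (characterized by finite differences), with
`sup_{h≠0} |h|^{-1/2}‖v(·+h)-v‖_{L²} ≤ C(‖∇v‖_{L²} + M₁ + M₂)`. -/
theorem stmt_13 :
    ∃ C > (0 : ℝ), ∀ (v : EuclideanSpace ℝ (Fin 3) → ℝ) (M₁ M₂ : ℝ),
      Differentiable ℝ v →
      (∀ x, (1 + ‖x‖) * |v x| ≤ M₁) →
      (∀ x, (1 + ‖x‖) ^ 2 * ‖fderiv ℝ v x‖ ≤ M₂) →
      MemLp (fun x => fderiv ℝ v x) 2 volume →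
      (⨆ (h : EuclideanSpace ℝ (Fin 3)) (_ : h ≠ 0),
          ENNReal.ofReal (‖h‖ ^ (-(1 : ℝ) / 2)) *
            eLpNorm (fun x => v (x + h) - v x) 2 volume)
        ≤ ENNReal.ofReal C *
            (eLpNorm (fun x => fderiv ℝ v x) 2 volume + ENNReal.ofReal (M₁ + M₂)) ∧
      (⨆ (h : EuclideanSpace ℝ (Fin 3)) (_ : h ≠ 0),
          ENNReal.ofReal (‖h‖ ^ (-(1 : ℝ) / 2)) *
            eLpNorm (fun x => v (x + h) - v x) 2 volume) < ⊤ := by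
  refine ⟨CC.toReal + 1, by positivity, ?_⟩
  intro v M₁ M₂ hv h₁ h₂ _
  have hM₁ : 0 ≤ M₁ := le_trans (by positivity) (h₁ 0)
  have hM₂ : 0 ≤ M₂ := le_trans (by positivity) (h₂ 0)
  set C : ℝ := CC.toReal + 1 with hCdef
  have hC0 : 0 ≤ C := by positivity
  have hCC : CC ≤ ENNReal.ofReal C := by
    calc CC = ENNReal.ofReal CC.toReal := (ENNReal.ofReal_toReal CC_lt_top.ne).symm
      _ ≤ ENNReal.ofReal C := ENNReal.ofReal_le_ofReal (by rw [hCdef]; linarith)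
  have hsup : (⨆ (h : EuclideanSpace ℝ (Fin 3)) (_ : h ≠ 0),
      ENNReal.ofReal (‖h‖ ^ (-(1 : ℝ) / 2)) *
        eLpNorm (fun x => v (x + h) - v x) 2 volume) ≤ ENNReal.ofReal (C * (M₁ + M₂)) := by
    refine iSup_le fun h => iSup_le fun hh => ?_
    have hpos : (0:ℝ) < ‖h‖ := norm_pos_iff.2 hh
    have hkey := key_est v M₁ M₂ hv h₁ h₂ h hh
    calc ENNReal.ofReal (‖h‖ ^ (-(1 : ℝ) / 2)) * eLpNorm (fun x => v (x + h) - v x) 2 volume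
        ≤ ENNReal.ofReal (‖h‖ ^ (-(1 : ℝ) / 2)) *
            (ENNReal.ofReal C * ENNReal.ofReal ((M₁+M₂) * ‖h‖ ^ ((1:ℝ)/2))) :=
          mul_le_mul_right (le_trans hkey (mul_le_mul_left hCC _)) _
      _ = ENNReal.ofReal (‖h‖ ^ (-(1 : ℝ) / 2) * (C * ((M₁+M₂) * ‖h‖ ^ ((1:ℝ)/2)))) := by
          rw [← ENNReal.ofReal_mul (by positivity), ← ENNReal.ofReal_mul (by positivity)]
      _ = ENNReal.ofReal (C * (M₁ + M₂)) := by
          congr 1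
          have hone : ‖h‖ ^ (-(1 : ℝ) / 2) * ‖h‖ ^ ((1:ℝ)/2) = 1 := by
            rw [← Real.rpow_add hpos]; norm_num
          calc ‖h‖ ^ (-(1 : ℝ) / 2) * (C * ((M₁+M₂) * ‖h‖ ^ ((1:ℝ)/2)))
              = C * (M₁+M₂) * (‖h‖ ^ (-(1 : ℝ) / 2) * ‖h‖ ^ ((1:ℝ)/2)) := by ring
            _ = C * (M₁ + M₂) := by rw [hone, mul_one]
  constructor
  · refine le_trans hsup ?_
    rw [ENNReal.ofReal_mul hC0]
    exact mul_le_mul_right le_add_self _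
  · exact lt_of_le_of_lt hsup ENNReal.ofReal_lt_top
end
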